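/- Let n ∈ ℕ, let B, C, X, Z be n×n complex matrices such that X² + B·X + C = 0, Z² + B·Z + C = 0, and X − Z is invertible, and let f : ℝ → ℂⁿ be continuous. Define U(t) = (exp(t·X) − exp(t·Z))·(X − Z)⁻¹ and V(t) = (X·exp(t·X) − Z·exp(t·Z))·(X − Z)⁻¹ (so V = U'). Then for any u₀, u₁ ∈ ℂⁿ, the derivative of the solution x(t) = V(t)·u₀ + U(t)·(u₁ + B·u₀) + ∫₀ᵗ U(t − s)·f(s) ds is given by x'(t) = V(t)·u₁ − U(t)·C·u₀ + ∫₀ᵗ V(t − s)·f(s) ds for all t ∈ ℝ. -/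

import Mathlib

/-!
Put `A = (X - Z)⁻¹`. Then `x = y_X - y_Z`, where `y_Y` is the variation-of-constants solution
of `y' = Y y + A f` with `y 0 = Y A u₀ + A (u₁ + B u₀)`. The forcing terms cancel in the
difference, so `x' = X y_X - Z y_Z`. Because `X, Z` is a complete pair of right solvents,
`Y² A + Y A B + A C = 0` for `Y = X, Z`, and this turns `X y_X - Z y_Z` into the claimed formula.
-/

open NormedSpace Matrix

theorem sq_mul_add_mul_mul_add_mul_eq_zero_of_solvents {R : Type*} [Ring R] {B C X Z A : R}
    (hX : X ^ 2 + B * X + C = 0) (hZ : Z ^ 2 + B * Z + C = 0)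
    (hA : (X - Z) * A = 1) (hA' : A * (X - Z) = 1) :
    X ^ 2 * A + X * A * B + A * C = 0 ∧ Z ^ 2 * A + Z * A * B + A * C = 0 := by
  have hsq : (X ^ 2 - Z ^ 2) * A = -B := by
    linear_combination (norm := noncomm_ring) (hX - hZ) * A - B * hA
  have hcube : (X ^ 3 - Z ^ 3) * A = B * B - C := by
    linear_combination (norm := noncomm_ring) (hX * X - hZ * Z) * A - B * hsq - C * hA
  have hMZ : Z ^ 2 * A + Z * A * B + A * C = X ^ 2 * A + X * A * B + A * C := by
    linear_combination (norm := noncomm_ring) -hsq - hA * B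
  have hXZM : (X - Z) * (X ^ 2 * A + X * A * B + A * C) = 0 := by
    linear_combination (norm := noncomm_ring) hcube + hsq * B + hA * C + Z * hMZ
  have hM : X ^ 2 * A + X * A * B + A * C = 0 := by
    rw [← one_mul (_ + _), ← hA', mul_assoc, hXZM, mul_zero]
  exact ⟨hM, hMZ.trans hM⟩

namespace Matrix

variable {𝕜 : Type*} [RCLike 𝕜] {m : Type*} [Fintype m]

theorem mulVec_intervalIntegral (M : Matrix m m 𝕜) {g : ℝ → m → 𝕜} {a b : ℝ}
    (hg : IntervalIntegrable g MeasureTheory.volume a b) :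
    M *ᵥ ∫ s in a..b, g s = ∫ s in a..b, M *ᵥ g s :=
  ((LinearMap.toContinuousLinearMap M.mulVecLin).intervalIntegral_comp_comm hg).symm

variable [DecidableEq m]

theorem exp_add_smul (Y : Matrix m m 𝕜) (a b : ℝ) :
    exp ((a + b) • Y) = exp (a • Y) * exp (b • Y) := by
  rw [← exp_add_of_commute _ _ (((Commute.refl Y).smul_left _).smul_right _), add_smul]

theorem exp_smul_mul_exp_neg_smul (Y : Matrix m m 𝕜) (t : ℝ) :
    exp (t • Y) * exp ((-t) • Y) = 1 := by
  rw [← exp_add_smul, add_neg_cancel, zero_smul, exp_zero]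

theorem mul_exp_smul_comm (Y : Matrix m m 𝕜) (c : ℝ) : Y * exp (c • Y) = exp (c • Y) * Y :=
  ((Commute.refl Y).smul_right c).exp_right.eq

theorem mulVec_exp_smul_mulVec (Y : Matrix m m 𝕜) (c : ℝ) (v : m → 𝕜) :
    Y *ᵥ (exp (c • Y) *ᵥ v) = exp (c • Y) *ᵥ (Y *ᵥ v) := by
  rw [mulVec_mulVec, mulVec_mulVec, mul_exp_smul_comm]

theorem hasDerivAt_exp_smul (Y : Matrix m m 𝕜) (t : ℝ) :
    letI := Matrix.linftyOpNormedRing (n := m) (α := 𝕜)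
    letI := Matrix.linftyOpNormedAlgebra (R := ℝ) (n := m) (α := 𝕜)
    HasDerivAt (fun r : ℝ => exp (r • Y)) (Y * exp (t • Y)) t :=
  let := Matrix.linftyOpNormedRing (n := m) (α := 𝕜)
  let := Matrix.linftyOpNormedAlgebra (R := ℝ) (n := m) (α := 𝕜)
  hasDerivAt_exp_smul_const' Y t

theorem hasDerivAt_exp_smul_mulVec (Y : Matrix m m 𝕜) {w : ℝ → m → 𝕜}
    {w' : m → 𝕜} {t : ℝ} (hw : HasDerivAt w w' t) :
    HasDerivAt (fun r : ℝ => exp (r • Y) *ᵥ w r)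
      (Y *ᵥ (exp (t • Y) *ᵥ w t) + exp (t • Y) *ᵥ w') t := by
  let := Matrix.linftyOpNormedRing (n := m) (α := 𝕜)
  let := Matrix.linftyOpNormedAlgebra (R := ℝ) (n := m) (α := 𝕜)
  let B : Matrix m m 𝕜 →L[ℝ] (m → 𝕜) →L[ℝ] (m → 𝕜) :=
    LinearMap.mkContinuous₂ (LinearMap.mk₂ ℝ (· *ᵥ ·) add_mulVec smul_mulVec mulVec_add
      fun c M v => mulVec_smul M c v) 1 fun M v => by simpa using linfty_opNorm_mulVec M v
  simpa [B, mulVec_mulVec, add_comm] using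
    B.hasDerivAt_of_bilinear (fun _ => hasDerivAt_exp_smul Y t) (fun _ => hw)

theorem continuous_exp_smul_mulVec (Y : Matrix m m 𝕜) {σ : ℝ → ℝ} (hσ : Continuous σ)
    {g : ℝ → m → 𝕜} (hg : Continuous g) :
    Continuous fun s : ℝ => exp (σ s • Y) *ᵥ g s := by
  let := Matrix.linftyOpNormedRing (n := m) (α := 𝕜)
  let := Matrix.linftyOpNormedAlgebra (R := ℝ) (n := m) (α := 𝕜)
  have hexp : Continuous fun r : ℝ => exp (r • Y) :=
    continuous_iff_continuousAt.2 fun t => (hasDerivAt_exp_smul Y t).continuousAt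
  exact (hexp.comp hσ).matrix_mulVec hg

/-- The variation-of-constants solution of `y' = Y y + g`, `y 0 = a`. -/
noncomputable def duhamel (Y : Matrix m m 𝕜) (a : m → 𝕜) (g : ℝ → m → 𝕜) (t : ℝ) : m → 𝕜 :=
  exp (t • Y) *ᵥ a + ∫ s in (0 : ℝ)..t, exp ((t - s) • Y) *ᵥ g s

variable {Y : Matrix m m 𝕜} {a : m → 𝕜} {g : ℝ → m → 𝕜}

theorem duhamel_eq_exp_smul_mulVec (hg : Continuous g) (t : ℝ) :
    duhamel Y a g t = exp (t • Y) *ᵥ (a + ∫ s in (0 : ℝ)..t, exp ((-s) • Y) *ᵥ g s) := by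
  have hcont := continuous_exp_smul_mulVec Y continuous_neg hg
  simp only [duhamel, mulVec_add, mulVec_intervalIntegral _ (hcont.intervalIntegrable 0 t),
    mulVec_mulVec, sub_eq_add_neg, exp_add_smul]

theorem hasDerivAt_duhamel (hg : Continuous g) (t : ℝ) :
    HasDerivAt (duhamel Y a g) (Y *ᵥ duhamel Y a g t + g t) t := by
  have hcont := continuous_exp_smul_mulVec Y continuous_neg hg
  have hint : HasDerivAt (fun r => a + ∫ s in (0 : ℝ)..r, exp ((-s) • Y) *ᵥ g s)
      (exp ((-t) • Y) *ᵥ g t) t :=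
    (intervalIntegral.integral_hasDerivAt_right (hcont.intervalIntegrable _ _)
      (hcont.stronglyMeasurableAtFilter _ _) hcont.continuousAt).const_add a
  rw [duhamel_eq_exp_smul_mulVec hg t, funext (duhamel_eq_exp_smul_mulVec (a := a) (Y := Y) hg)]
  convert hasDerivAt_exp_smul_mulVec Y hint using 2
  rw [mulVec_mulVec, exp_smul_mul_exp_neg_smul, one_mulVec]

theorem mulVec_duhamel (hg : Continuous g) (t : ℝ) :
    Y *ᵥ duhamel Y a g t =
      exp (t • Y) *ᵥ (Y *ᵥ a) + ∫ s in (0 : ℝ)..t, exp ((t - s) • Y) *ᵥ (Y *ᵥ g s) := by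
  have hcont := continuous_exp_smul_mulVec Y (continuous_sub_left t) hg
  simp only [duhamel, mulVec_add, mulVec_intervalIntegral _ (hcont.intervalIntegrable 0 t),
    mulVec_exp_smul_mulVec]

theorem intervalIntegral_exp_mul_sub_exp_mul_mulVec (X Z P Q : Matrix m m 𝕜) (hg : Continuous g)
    (t : ℝ) :
    ∫ s in (0 : ℝ)..t, (exp ((t - s) • X) * P - exp ((t - s) • Z) * Q) *ᵥ g s =
      (∫ s in (0 : ℝ)..t, exp ((t - s) • X) *ᵥ (P *ᵥ g s)) -
        ∫ s in (0 : ℝ)..t, exp ((t - s) • Z) *ᵥ (Q *ᵥ g s) := by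
  simp only [sub_mulVec, ← mulVec_mulVec]
  exact intervalIntegral.integral_sub
    ((continuous_exp_smul_mulVec X (continuous_sub_left t)
      (continuous_const.matrix_mulVec hg)).intervalIntegrable 0 t)
    ((continuous_exp_smul_mulVec Z (continuous_sub_left t)
      (continuous_const.matrix_mulVec hg)).intervalIntegrable 0 t)

end Matrix

/-- the derivative of the solution
`x(t) = V(t)u₀ + U(t)(u₁ + Bu₀) + ∫₀ᵗ U(t−s)f(s) ds` is given by
`x'(t) = V(t)u₁ − U(t)Cu₀ + ∫₀ᵗ V(t−s)f(s) ds`. -/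
theorem derivative_of_solution (n : ℕ) (B C X Z : Matrix (Fin n) (Fin n) ℂ)
    (hX : X ^ 2 + B * X + C = 0) (hZ : Z ^ 2 + B * Z + C = 0) (hXZ : IsUnit (X - Z))
    (f : ℝ → (Fin n → ℂ)) (hf : Continuous f)
    (U V : ℝ → Matrix (Fin n) (Fin n) ℂ)
    (hU : ∀ t : ℝ, U t =
      (NormedSpace.exp ((t : ℂ) • X) - NormedSpace.exp ((t : ℂ) • Z)) * (X - Z)⁻¹)
    (hV : ∀ t : ℝ, V t =
      (X * NormedSpace.exp ((t : ℂ) • X) - Z * NormedSpace.exp ((t : ℂ) • Z)) * (X - Z)⁻¹)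
    (u₀ u₁ : Fin n → ℂ) (x : ℝ → (Fin n → ℂ))
    (hx : ∀ t : ℝ, x t = (V t).mulVec u₀ + (U t).mulVec (u₁ + B.mulVec u₀) +
      ∫ s in (0:ℝ)..t, (U (t - s)).mulVec (f s)) :
    ∀ t : ℝ, HasDerivAt x
      ((V t).mulVec u₁ - (U t).mulVec (C.mulVec u₀) +
        ∫ s in (0:ℝ)..t, (V (t - s)).mulVec (f s)) t := by
  intro t
  set A := (X - Z)⁻¹
  have hdet := (isUnit_iff_isUnit_det _).mp hXZ
  obtain ⟨kX, kZ⟩ := sq_mul_add_mul_mul_add_mul_eq_zero_of_solvents hX hZ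
    (mul_nonsing_inv _ hdet) (nonsing_inv_mul _ hdet)
  simp only [Complex.coe_smul, sub_mul, mul_exp_smul_comm, mul_assoc] at hU hV
  have hinit : ∀ Y : Matrix (Fin n) (Fin n) ℂ, Y ^ 2 * A + Y * A * B + A * C = 0 →
      Y *ᵥ ((Y * A) *ᵥ u₀ + A *ᵥ (u₁ + B *ᵥ u₀)) = (Y * A) *ᵥ u₁ - (A * C) *ᵥ u₀ := by
    intro Y hY
    rw [eq_neg_of_add_eq_zero_right hY]
    simp only [mulVec_add, mulVec_mulVec, neg_mulVec, add_mulVec, sq, mul_assoc]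
    abel
  have hAf : Continuous fun s => A *ᵥ f s := continuous_const.matrix_mulVec hf
  have hsol : x = fun r =>
      duhamel X ((X * A) *ᵥ u₀ + A *ᵥ (u₁ + B *ᵥ u₀)) (fun s => A *ᵥ f s) r -
        duhamel Z ((Z * A) *ᵥ u₀ + A *ᵥ (u₁ + B *ᵥ u₀)) (fun s => A *ᵥ f s) r := by
    funext r
    simp only [hx, hU, hV, intervalIntegral_exp_mul_sub_exp_mul_mulVec _ _ _ _ hf]
    simp only [duhamel, sub_mulVec, mulVec_add, mulVec_mulVec, sub_mul, mul_assoc]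
    abel
  refine hsol ▸ ((hasDerivAt_duhamel hAf t).sub (hasDerivAt_duhamel hAf t)).congr_deriv ?_
  simp only [mulVec_duhamel hAf, hinit X kX, hinit Z kZ, hU, hV,
    intervalIntegral_exp_mul_sub_exp_mul_mulVec _ _ _ _ hf]
  simp only [sub_mulVec, mulVec_sub, mulVec_mulVec, sub_mul, mul_assoc]
  abel
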